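/- arXiv:2002.12436 — 3 statements merged into one kernel-verified Lean document; each statement's English description precedes it below -/
import Mathlib

section
/- Fix u > 1 and define g(α) = α/(u^α − 1) for α > 0. Then g is strictly decreasing and strictly convex in α. -/
/-!
Writing `u ^ α = exp (α log u)` gives `α / (u ^ α - 1) = h (α log u) / log u` with
`h t = t / (exp t - 1)`, so it suffices to treat `h`. Its derivative has numerator
`exp t - 1 - t exp t < 0`, and its second derivative is
`exp t (t (exp t + 1) - 2 (exp t - 1)) / (exp t - 1) ^ 3`, whose numerator is positive because
`t (exp t + 1) - 2 (exp t - 1)` vanishes at `0` and has derivative `1 - exp t + t exp t > 0`.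
-/

open Set Real Filter Topology

lemma exp_sub_one_lt_mul_exp {t : ℝ} (ht : t ≠ 0) : exp t - 1 < t * exp t := by
  have h := add_one_lt_exp (neg_ne_zero.2 ht)
  have hinv : exp t * exp (-t) = 1 := by rw [← exp_add, add_neg_cancel, exp_zero]
  nlinarith [mul_lt_mul_of_pos_left h (exp_pos t)]

lemma two_mul_exp_sub_one_lt {t : ℝ} (ht : 0 < t) : 2 * (exp t - 1) < t * (exp t + 1) := by
  let φ : ℝ → ℝ := fun x => x * (exp x + 1) - 2 * (exp x - 1)
  have hφ : ∀ x, HasDerivAt φ (1 * (exp x + 1) + x * exp x - 2 * exp x) x := fun x =>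
    ((hasDerivAt_id' x).mul ((hasDerivAt_exp x).add_const 1)).sub
      (((hasDerivAt_exp x).sub_const 1).const_mul 2)
  have hmono : StrictMonoOn φ (Ici 0) := by
    refine strictMonoOn_of_deriv_pos (convex_Ici 0)
      (fun x _ => (hφ x).continuousAt.continuousWithinAt) fun x hx => ?_
    rw [interior_Ici] at hx
    rw [(hφ x).deriv]
    linarith [exp_sub_one_lt_mul_exp (ne_of_gt hx)]
  have := hmono self_mem_Ici ht.le ht
  simp only [φ, exp_zero] at this
  linarith

lemma exp_sub_one_ne_zero {t : ℝ} (ht : t ≠ 0) : exp t - 1 ≠ 0 :=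
  sub_ne_zero.2 (mt (exp_eq_one_iff t).1 ht)

lemma hasDerivAt_div_exp_sub_one {t : ℝ} (ht : t ≠ 0) :
    HasDerivAt (fun t => t / (exp t - 1)) ((exp t - 1 - t * exp t) / (exp t - 1) ^ 2) t :=
  ((hasDerivAt_id' t).div ((hasDerivAt_exp t).sub_const 1) (exp_sub_one_ne_zero ht)).congr_deriv
    (by ring)

lemma hasDerivAt_deriv_div_exp_sub_one {t : ℝ} (ht : t ≠ 0) :
    HasDerivAt (deriv fun t => t / (exp t - 1))
      (exp t * (t * (exp t + 1) - 2 * (exp t - 1)) / (exp t - 1) ^ 3) t := by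
  have hderiv : (deriv fun t => t / (exp t - 1)) =ᶠ[𝓝 t]
      fun t => (exp t - 1 - t * exp t) / (exp t - 1) ^ 2 := by
    filter_upwards [isOpen_ne.mem_nhds ht] with x hx
    exact (hasDerivAt_div_exp_sub_one hx).deriv
  have hnum : HasDerivAt (fun t => exp t - 1 - t * exp t)
      (exp t - (1 * exp t + t * exp t)) t :=
    ((hasDerivAt_exp t).sub_const 1).sub ((hasDerivAt_id' t).mul (hasDerivAt_exp t))
  have hden := ((hasDerivAt_exp t).sub_const 1).fun_pow 2
  have hne := exp_sub_one_ne_zero ht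
  refine ((hnum.div hden (pow_ne_zero 2 hne)).congr_deriv ?_).congr_of_eventuallyEq hderiv
  field_simp
  ring

lemma strictAntiOn_div_exp_sub_one : StrictAntiOn (fun t => t / (exp t - 1)) (Ioi 0) := by
  refine strictAntiOn_of_deriv_neg (convex_Ioi 0)
    (fun t ht => (hasDerivAt_div_exp_sub_one (ne_of_gt ht)).continuousAt.continuousWithinAt)
    fun t ht => ?_
  rw [interior_Ioi] at ht
  rw [(hasDerivAt_div_exp_sub_one (ne_of_gt ht)).deriv]
  exact div_neg_of_neg_of_pos (by linarith [exp_sub_one_lt_mul_exp (ne_of_gt ht)])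
    (pow_pos (sub_pos.2 (one_lt_exp_iff.2 ht)) 2)

lemma strictConvexOn_div_exp_sub_one : StrictConvexOn ℝ (Ioi 0) (fun t => t / (exp t - 1)) := by
  refine strictConvexOn_of_deriv2_pos (convex_Ioi 0)
    (fun t ht => (hasDerivAt_div_exp_sub_one (ne_of_gt ht)).continuousAt.continuousWithinAt)
    fun t ht => ?_
  rw [interior_Ioi] at ht
  rw [Function.iterate_succ_apply, Function.iterate_one,
    (hasDerivAt_deriv_div_exp_sub_one (ne_of_gt ht)).deriv]
  exact div_pos (mul_pos (exp_pos t) (sub_pos.2 (two_mul_exp_sub_one_lt ht)))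
    (pow_pos (sub_pos.2 (one_lt_exp_iff.2 ht)) 3)

lemma StrictConvexOn.comp_const_mul {s : Set ℝ} {f : ℝ → ℝ} (hf : StrictConvexOn ℝ s f)
    {c : ℝ} (hc : c ≠ 0) : StrictConvexOn ℝ ((c * ·) ⁻¹' s) (fun x => f (c * x)) := by
  refine ⟨hf.1.smul_preimage c, fun x hx y hy hxy a b ha hb hab => ?_⟩
  have := hf.2 hx hy (fun h => hxy (mul_left_cancel₀ hc h)) ha hb hab
  simpa only [smul_eq_mul, mul_add, mul_left_comm c] using this

lemma StrictConvexOn.const_mul {s : Set ℝ} {f : ℝ → ℝ} (hf : StrictConvexOn ℝ s f)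
    {c : ℝ} (hc : 0 < c) : StrictConvexOn ℝ s (fun x => c * f x) := by
  refine ⟨hf.1, fun x hx y hy hxy a b ha hb hab => ?_⟩
  have := mul_lt_mul_of_pos_left (hf.2 hx hy hxy ha hb hab) hc
  simp only [smul_eq_mul] at this ⊢
  linarith

lemma div_rpow_sub_one_eq {u : ℝ} (hu : 0 < u) (hu1 : u ≠ 1) (a : ℝ) :
    a / (u ^ a - 1) = (log u)⁻¹ * (log u * a / (exp (log u * a) - 1)) := by
  have hlog : log u ≠ 0 := log_ne_zero_of_pos_of_ne_one hu hu1
  rw [rpow_def_of_pos hu]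
  field_simp

/-- For fixed `u > 1`, the function `g(α) = α / (u^α - 1)` is strictly
decreasing and strictly convex on `(0, ∞)`. -/
theorem stmt_5 (u : ℝ) (hu : 1 < u) :
    StrictAntiOn (fun a : ℝ => a / (u ^ a - 1)) (Ioi (0:ℝ)) ∧
    StrictConvexOn ℝ (Ioi (0:ℝ)) (fun a : ℝ => a / (u ^ a - 1)) := by
  have hc : 0 < log u := log_pos hu
  simp only [div_rpow_sub_one_eq (zero_lt_one.trans hu) hu.ne']
  refine ⟨fun a ha b hb hab => ?_, ?_⟩
  · exact mul_lt_mul_of_pos_left (strictAntiOn_div_exp_sub_one (mul_pos hc ha) (mul_pos hc hb)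
      (mul_lt_mul_of_pos_left hab hc)) (inv_pos.2 hc)
  · have := (strictConvexOn_div_exp_sub_one.comp_const_mul hc.ne').const_mul (inv_pos.2 hc)
    rwa [preimage_const_mul_Ioi₀ 0 hc, zero_div] at this
end

section
/- Let X_1,...,X_n and Y_1,...,Y_n be two sets of n independent Pareto-distributed random variables with survival functions F̄_i(x) = (1 + x/θ)^{-α_i} and Ḡ_i(x) = (1 + x/θ)^{-α_i*} respectively (x > 0, θ > 0, α_i > 0, α_i* > 0). If (α_1,...,α_n) is weakly supermajorized by (α_1*,...,α_n*), then X_{n:n} ≤_rh Y_{n:n}, i.e., the reversed hazard rate of max{X_i} is pointwise at most that of max{Y_i}. -/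
open Set Finset

/-- The sum of the `k` smallest entries of `a`, expressed as the infimum of
sums over `k`-element subsets. -/
noncomputable def kSmallestSum (n k : ℕ) (a : Fin n → ℝ) : ℝ :=
  sInf {s | ∃ S : Finset (Fin n), S.card = k ∧ s = ∑ i ∈ S, a i}

/-- `a` is weakly supermajorized by `b` (`a ≺^w b`): for every `k`, the sum of
the `k` smallest entries of `a` is at least that of `b`. -/
def WeaklySupermajorizedBy (n : ℕ) (a b : Fin n → ℝ) : Prop :=
  ∀ k ≤ n, kSmallestSum n k b ≤ kSmallestSum n k a

/-!
With `s = log (1 + x / θ)` we have `(1 + x / θ) ^ α = exp (s α)`, so both reversed hazard rates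
are `1 / (x + θ)` times `∑ φ αᵢ` with `φ t = t / (exp (s t) - 1)`, a decreasing convex function on
`(0, ∞)`. For such `φ`, weak supermajorization `a ≺^w b` gives `∑ φ aᵢ ≤ ∑ φ bᵢ`: sort both vectors
increasingly, bound `φ aᵢ - φ bᵢ` by the tangent term `φ' aᵢ (aᵢ - bᵢ)`, and sum by parts, since the
partial sums of `aᵢ - bᵢ` are nonnegative and `φ' aᵢ` is nonpositive and increasing in `i`.
-/

lemma Fin.castLE_le_of_strictMono {k n : ℕ} {f : Fin k → Fin n} (hf : StrictMono f)
    (hk : k ≤ n) (j : Fin k) : Fin.castLE hk j ≤ f j := by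
  obtain ⟨m, hm⟩ := j
  induction m with
  | zero => exact Fin.le_def.2 (Nat.zero_le _)
  | succ m ih =>
    have hstep : f ⟨m, by omega⟩ < f ⟨m + 1, hm⟩ := hf (Fin.lt_def.2 m.lt_succ_self)
    have := ih (by omega)
    rw [Fin.le_def] at this ⊢
    rw [Fin.lt_def] at hstep
    simp only [Fin.val_castLE] at this ⊢
    omega

lemma Monotone.sum_castLE_le_sum {n k : ℕ} {g : Fin n → ℝ} (hg : Monotone g)
    (hk : k ≤ n) {T : Finset (Fin n)} (hT : T.card = k) :
    ∑ j : Fin k, g (Fin.castLE hk j) ≤ ∑ i ∈ T, g i := by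
  rw [← T.sum_coe_sort g, ← (T.orderIsoOfFin hT).toEquiv.sum_comp]
  exact sum_le_sum fun j _ =>
    hg (Fin.castLE_le_of_strictMono (fun _ _ h => (T.orderIsoOfFin hT).strictMono h) hk j)

lemma kSmallestSum_eq_sum_sort {n k : ℕ} (hk : k ≤ n) (f : Fin n → ℝ) :
    kSmallestSum n k f = ∑ j : Fin k, f (Tuple.sort f (Fin.castLE hk j)) := by
  set σ := Tuple.sort f
  have hinj : Function.Injective (fun j : Fin k => σ (Fin.castLE hk j)) :=
    σ.injective.comp (Fin.castLE_injective hk)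
  refine IsLeast.csInf_eq ⟨⟨univ.image fun j => σ (Fin.castLE hk j), ?_, ?_⟩, ?_⟩
  · rw [card_image_of_injective _ hinj, card_univ, Fintype.card_fin]
  · rw [sum_image fun u _ v _ h => hinj h]
  · rintro _ ⟨S, hS, rfl⟩
    have hT : (S.image σ.symm).card = k := by
      rw [card_image_of_injective _ σ.symm.injective, hS]
    calc ∑ j : Fin k, f (σ (Fin.castLE hk j))
        ≤ ∑ j ∈ S.image σ.symm, f (σ j) := (Tuple.monotone_sort f).sum_castLE_le_sum hk hT
      _ = ∑ i ∈ S, f i := by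
        rw [sum_image fun u _ v _ h => σ.symm.injective h]
        simp

lemma Fin.sum_mul_le_mul_sum_of_monotone {n : ℕ} {c d : Fin n → ℝ} {M : ℝ}
    (hc : Monotone c) (hcM : ∀ i, c i ≤ M)
    (hd : ∀ k (hk : k ≤ n), 0 ≤ ∑ j : Fin k, d (Fin.castLE hk j)) :
    ∑ i, c i * d i ≤ M * ∑ i, d i := by
  induction n generalizing M with
  | zero => simp
  | succ n ih =>
    have hprefix : ∑ i, c (Fin.castSucc i) * d (Fin.castSucc i)
        ≤ c (Fin.last n) * ∑ i, d (Fin.castSucc i) :=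
      ih (hc.comp Fin.strictMono_castSucc.monotone) (fun i => hc (Fin.le_last _))
        (fun k hk => hd k (hk.trans n.le_succ))
    have htotal : 0 ≤ ∑ i, d i := by simpa using hd (n + 1) le_rfl
    rw [Fin.sum_univ_castSucc] at htotal
    rw [Fin.sum_univ_castSucc, Fin.sum_univ_castSucc]
    nlinarith [hcM (Fin.last n)]

lemma ConvexOn.add_mul_sub_le_of_hasDerivAt {I : Set ℝ} {φ : ℝ → ℝ} {φ' u v : ℝ}
    (hφ : ConvexOn ℝ I φ) (hu : u ∈ I) (hv : v ∈ I) (hφ' : HasDerivAt φ φ' u) :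
    φ u + φ' * (v - u) ≤ φ v := by
  rcases lt_trichotomy u v with huv | rfl | hvu
  · have := hφ.le_slope_of_hasDerivAt hu hv huv hφ'
    rw [slope_def_field, le_div_iff₀ (sub_pos.2 huv)] at this
    linarith
  · simp
  · have := hφ.slope_le_of_hasDerivAt hv hu hvu hφ'
    rw [slope_def_field, div_le_iff₀ (sub_pos.2 hvu)] at this
    linarith

theorem ConvexOn.sum_le_sum_of_weaklySupermajorizedBy {I : Set ℝ} {φ φ' : ℝ → ℝ}
    (hφ : ConvexOn ℝ I φ) (hφ' : ∀ t ∈ I, HasDerivAt φ (φ' t) t)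
    (hφ'_nonpos : ∀ t ∈ I, φ' t ≤ 0) {n : ℕ} {a b : Fin n → ℝ}
    (ha : ∀ i, a i ∈ I) (hb : ∀ i, b i ∈ I) (hab : WeaklySupermajorizedBy n a b) :
    ∑ i, φ (a i) ≤ ∑ i, φ (b i) := by
  set x := a ∘ Tuple.sort a
  set y := b ∘ Tuple.sort b
  have hpartial : ∀ k (hk : k ≤ n), 0 ≤ ∑ j : Fin k, (x - y) (Fin.castLE hk j) := by
    intro k hk
    have := hab k hk
    rw [kSmallestSum_eq_sum_sort hk, kSmallestSum_eq_sum_sort hk] at this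
    simpa [x, y, sum_sub_distrib] using this
  have hmono : Monotone (φ' ∘ x) := by
    intro i j hij
    have := hφ.monotoneOn_deriv (fun t ht => (hφ' t ht).differentiableAt) (ha _) (ha _)
      (Tuple.monotone_sort a hij)
    rwa [(hφ' _ (ha _)).deriv, (hφ' _ (ha _)).deriv] at this
  have htangent : ∀ j, φ (x j) - φ (y j) ≤ φ' (x j) * (x - y) j := fun j => by
    have := hφ.add_mul_sub_le_of_hasDerivAt (ha (Tuple.sort a j)) (hb (Tuple.sort b j))
      (hφ' _ (ha _))
    simp only [Pi.sub_apply, x, y, Function.comp_apply]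
    linarith
  have habel := Fin.sum_mul_le_mul_sum_of_monotone hmono (fun j => hφ'_nonpos _ (ha _)) hpartial
  simp only [zero_mul, Function.comp_apply] at habel
  calc ∑ i, φ (a i) = ∑ j, φ (x j) := (Equiv.sum_comp (Tuple.sort a) (φ ∘ a)).symm
    _ ≤ ∑ j, φ (y j) := by
      rw [← sub_nonpos, ← sum_sub_distrib]
      exact (sum_le_sum fun j _ => htangent j).trans habel
    _ = ∑ i, φ (b i) := Equiv.sum_comp (Tuple.sort b) (φ ∘ b)

open Real

lemma one_sub_mul_exp_le_one (u : ℝ) : (1 - u) * exp u ≤ 1 :=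
  calc (1 - u) * exp u ≤ exp (-u) * exp u :=
        mul_le_mul_of_nonneg_right (one_sub_le_exp_neg u) (exp_pos u).le
    _ = 1 := by rw [← exp_add, neg_add_cancel, exp_zero]

lemma sub_two_mul_exp_add_add_two_nonneg {u : ℝ} (hu : 0 ≤ u) :
    0 ≤ (u - 2) * exp u + u + 2 := by
  have hmono : MonotoneOn (fun v => (v - 2) * exp v + v + 2) (Ici 0) := by
    refine monotoneOn_of_hasDerivWithinAt_nonneg (f' := fun v => 1 - (1 - v) * exp v)
      (convex_Ici 0) (by fun_prop) (fun v _ => ?_) (fun v _ => ?_)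
    · have := ((((hasDerivAt_id v).sub_const 2).mul (hasDerivAt_exp v)).add
        (hasDerivAt_id v)).add_const 2
      exact (this.congr_deriv (by simp only [id]; ring)).hasDerivWithinAt
    · linarith [one_sub_mul_exp_le_one v]
  simpa using hmono self_mem_Ici hu hu

lemma hasDerivAt_div_exp_mul_sub_one {s t : ℝ} (hs : 0 < s) (ht : 0 < t) :
    HasDerivAt (fun t => t / (exp (s * t) - 1))
      (((1 - s * t) * exp (s * t) - 1) / (exp (s * t) - 1) ^ 2) t := by
  have hE : exp (s * t) - 1 ≠ 0 := (sub_pos.2 (one_lt_exp_iff.2 (mul_pos hs ht))).ne'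
  have := (hasDerivAt_id t).div (((hasDerivAt_id t).const_mul s).exp.sub_const 1) hE
  exact this.congr_deriv (by simp only [id]; ring)

lemma convexOn_div_exp_mul_sub_one {s : ℝ} (hs : 0 < s) :
    ConvexOn ℝ (Ioi 0) fun t => t / (exp (s * t) - 1) := by
  have hE : ∀ t ∈ Ioi (0 : ℝ), exp (s * t) - 1 ≠ 0 := fun t ht =>
    (sub_pos.2 (one_lt_exp_iff.2 (mul_pos hs ht))).ne'
  refine convexOn_of_hasDerivWithinAt2_nonneg (convex_Ioi 0)
    (f'' := fun t => s * exp (s * t) * ((s * t - 2) * exp (s * t) + s * t + 2)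
      / (exp (s * t) - 1) ^ 3)
    (fun t ht => (hasDerivAt_div_exp_mul_sub_one hs ht).continuousAt.continuousWithinAt)
    (fun t ht => (hasDerivAt_div_exp_mul_sub_one hs (interior_subset ht)).hasDerivWithinAt)
    (fun t ht => ?_) (fun t ht => ?_) <;> rw [interior_Ioi] at ht
  · have hexp := ((hasDerivAt_id t).const_mul s).exp
    have := (((((hasDerivAt_id t).const_mul s).const_sub 1).mul hexp).sub_const 1).div
      ((hexp.sub_const 1).pow 2) (pow_ne_zero 2 (hE t ht))
    refine (this.congr_deriv ?_).hasDerivWithinAt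
    simp only [id, Pi.mul_apply, Pi.pow_apply, Nat.cast_ofNat]
    field_simp [hE t ht]
    ring
  · have hE' : 0 < exp (s * t) - 1 := sub_pos.2 (one_lt_exp_iff.2 (mul_pos hs ht))
    have := sub_two_mul_exp_add_add_two_nonneg (mul_pos hs ht).le
    positivity

/-- Weak supermajorization of shape parameters yields reversed hazard rate
ordering of maxima of independent Pareto samples: the reversed hazard rate of
`X_{n:n}`, namely `(1/(x+θ)) ∑ αᵢ/((x/θ+1)^{αᵢ} - 1)`, is pointwise at most
that of `Y_{n:n}`. -/
theorem stmt_6 (n : ℕ) (θ : ℝ) (hθ : 0 < θ)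
    (a astar : Fin n → ℝ)
    (ha : ∀ i, 0 < a i) (hastar : ∀ i, 0 < astar i)
    (hmaj : WeaklySupermajorizedBy n a astar) :
    ∀ x : ℝ, 0 < x →
      (1 / (x + θ)) * ∑ i, a i / ((x / θ + 1) ^ (a i) - 1) ≤
        (1 / (x + θ)) * ∑ i, astar i / ((x / θ + 1) ^ (astar i) - 1) := by
  intro x hx
  have hbase : 1 < x / θ + 1 := lt_add_of_pos_left 1 (div_pos hx hθ)
  set s := log (x / θ + 1)
  have hs : 0 < s := log_pos hbase
  have hrpow : ∀ t : ℝ, (x / θ + 1) ^ t = exp (s * t) := rpow_def_of_pos (by linarith)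
  simp only [hrpow]
  refine mul_le_mul_of_nonneg_left ?_ (by positivity)
  refine (convexOn_div_exp_mul_sub_one hs).sum_le_sum_of_weaklySupermajorizedBy
    (fun t ht => hasDerivAt_div_exp_mul_sub_one hs ht) (fun t _ => ?_) ha hastar hmaj
  exact div_nonpos_of_nonpos_of_nonneg (by linarith [one_sub_mul_exp_le_one (s * t)])
    (sq_nonneg _)
end

section
/- Let X and Y be random variables with X ≤_disp Y and finite variances. Then Var(X) ≤ Var(Y). -/
/-!
Realise both laws on `(0,1)` with Lebesgue measure as `F⁻¹(U)` and `G⁻¹(U)`. With an independent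
copy `U'` of `U`, `Var X = E[(F⁻¹(U) - F⁻¹(U'))²] / 2`, and since `F⁻¹` and `G⁻¹ - F⁻¹` are both
increasing, `|F⁻¹(u) - F⁻¹(v)| ≤ |G⁻¹(u) - G⁻¹(v)|` for all `u, v ∈ (0,1)`.
-/

open Set MeasureTheory

/-- The right-continuous quantile function of a probability measure on `ℝ`. -/
noncomputable def rcQuantile (μ : Measure ℝ) (t : ℝ) : ℝ :=
  sInf {x : ℝ | t ≤ (μ (Iic x)).toReal}

open ProbabilityTheory Filter Topology

theorem StieltjesFunction.sInf_le_iff (f : StieltjesFunction ℝ) {t : ℝ}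
    (hne : {x | t ≤ f x}.Nonempty) (hbdd : BddBelow {x | t ≤ f x}) (x : ℝ) :
    sInf {x | t ≤ f x} ≤ x ↔ t ≤ f x := by
  refine ⟨fun h => le_trans ?_ (f.mono h), fun h => csInf_le hbdd h⟩
  set a := sInf {x | t ≤ f x}
  have hright : ∀ y ∈ Ioi a, t ≤ f y := fun y hy => by
    obtain ⟨s, hs, hsy⟩ := (csInf_lt_iff hbdd hne).1 hy
    exact hs.trans (f.mono hsy.le)
  exact ge_of_tendsto (f.right_continuous a |>.mono Ioi_subset_Ici_self)
    (eventually_nhdsWithin_of_forall hright)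

instance : IsProbabilityMeasure (volume.restrict (Ioo (0 : ℝ) 1)) := ⟨by simp⟩

section Quantile

variable (μ : Measure ℝ) [IsProbabilityMeasure μ]

theorem rcQuantile_le_iff {t : ℝ} (ht : t ∈ Ioo (0 : ℝ) 1) (x : ℝ) :
    rcQuantile μ t ≤ x ↔ t ≤ cdf μ x := by
  have hne : {x | t ≤ cdf μ x}.Nonempty :=
    ((tendsto_cdf_atTop μ).eventually (eventually_ge_nhds ht.2)).exists
  have hbdd : BddBelow {x | t ≤ cdf μ x} := by
    obtain ⟨y, hy⟩ := ((tendsto_cdf_atBot μ).eventually (eventually_lt_nhds ht.1)).exists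
    exact ⟨y, fun z hz => le_of_not_gt fun hzy => (hz.trans ((cdf μ).mono hzy.le)).not_gt hy⟩
  simp_rw [rcQuantile, ← measureReal_def, ← cdf_eq_real]
  exact (cdf μ).sInf_le_iff hne hbdd x

theorem monotoneOn_rcQuantile : MonotoneOn (rcQuantile μ) (Ioo (0 : ℝ) 1) :=
  fun _ hs _ ht hst =>
    (rcQuantile_le_iff μ hs _).2 <| hst.trans <| (rcQuantile_le_iff μ ht _).1 le_rfl

theorem aemeasurable_rcQuantile :
    AEMeasurable (rcQuantile μ) (volume.restrict (Ioo (0 : ℝ) 1)) :=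
  aemeasurable_restrict_of_monotoneOn measurableSet_Ioo (monotoneOn_rcQuantile μ)

theorem map_rcQuantile : (volume.restrict (Ioo (0 : ℝ) 1)).map (rcQuantile μ) = μ := by
  have := Measure.isProbabilityMeasure_map (aemeasurable_rcQuantile μ)
  refine Measure.ext_of_Iic _ _ fun x => ?_
  have hpre : rcQuantile μ ⁻¹' Iic x ∩ Ioo 0 1 = Ioo 0 1 ∩ Iic (cdf μ x) := by
    ext t
    simp only [mem_inter_iff, mem_preimage, mem_Iic]
    exact ⟨fun ⟨h, ht⟩ => ⟨ht, (rcQuantile_le_iff μ ht x).1 h⟩,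
      fun ⟨ht, h⟩ => ⟨(rcQuantile_le_iff μ ht x).2 h, ht⟩⟩
  rw [Measure.map_apply_of_aemeasurable (aemeasurable_rcQuantile μ) measurableSet_Iic,
    Measure.restrict_apply' measurableSet_Ioo, hpre,
    measure_congr ((Ioo_ae_eq_Ioc (μ := volume)).inter (ae_eq_refl (Iic (cdf μ x)))),
    Ioc_inter_Iic, min_eq_right (cdf_le_one μ x), Real.volume_Ioc, sub_zero, ofReal_cdf]

theorem variance_rcQuantile :
    Var[rcQuantile μ; volume.restrict (Ioo (0 : ℝ) 1)] = Var[id; μ] := by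
  rw [← variance_id_map (aemeasurable_rcQuantile μ), map_rcQuantile]

theorem memLp_rcQuantile (hμ : MemLp id 2 μ) :
    MemLp (rcQuantile μ) 2 (volume.restrict (Ioo (0 : ℝ) 1)) := by
  rw [← map_rcQuantile μ] at hμ
  exact (memLp_map_measure_iff aestronglyMeasurable_id (aemeasurable_rcQuantile μ)).1 hμ

end Quantile

theorem abs_sub_le_abs_sub_of_monotoneOn {α β : Type*} [LinearOrder α] [AddCommGroup β]
    [LinearOrder β] [IsOrderedAddMonoid β] {s : Set α} {f g : α → β} (hf : MonotoneOn f s)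
    (hgf : MonotoneOn (fun t => g t - f t) s) {u v : α} (hu : u ∈ s) (hv : v ∈ s) :
    |f u - f v| ≤ |g u - g v| := by
  wlog huv : u ≤ v generalizing u v
  · rw [abs_sub_comm, abs_sub_comm (g u)]
    exact this hv hu (le_of_not_ge huv)
  have hdiff : f v - f u ≤ g v - g u := by
    have := hgf hu hv huv
    simp only at this
    rwa [sub_le_sub_iff, add_comm, ← sub_le_sub_iff] at this
  rw [abs_sub_comm, abs_of_nonneg (sub_nonneg.2 (hf hu hv huv)), abs_sub_comm]
  exact hdiff.trans (le_abs_self _)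

section Variance

variable {Ω : Type*} [MeasurableSpace Ω] {P : Measure Ω} [IsProbabilityMeasure P] {X Y : Ω → ℝ}

theorem variance_eq_integral_prod_sub_sq_div_two (hX : MemLp X 2 P) :
    Var[X; P] = (∫ p, (X p.1 - X p.2) ^ 2 ∂(P.prod P)) / 2 := by
  have hcopies : Var[fun p => X p.1 - X p.2; P.prod P] = 2 * Var[X; P] := by
    have := variance_add_prod hX hX.neg
    simp only [Pi.neg_apply, ← sub_eq_add_neg, variance_neg] at this
    rw [this, two_mul]
  have hmean : ∫ p, (X p.1 - X p.2) ∂(P.prod P) = 0 := by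
    have hint := hX.integrable one_le_two
    rw [integral_sub (hint.comp_fst P) (hint.comp_snd P), integral_fun_fst, integral_fun_snd]
    simp
  have hsq : Var[fun p => X p.1 - X p.2; P.prod P] = ∫ p, (X p.1 - X p.2) ^ 2 ∂(P.prod P) :=
    variance_of_integral_eq_zero ((hX.comp_fst P).sub (hX.comp_snd P)).aemeasurable hmean
  rw [← hsq, hcopies]
  ring

theorem variance_le_variance_of_ae_abs_sub_le (hX : MemLp X 2 P) (hY : MemLp Y 2 P)
    (h : ∀ᵐ p ∂(P.prod P), |X p.1 - X p.2| ≤ |Y p.1 - Y p.2|) : Var[X; P] ≤ Var[Y; P] := by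
  rw [variance_eq_integral_prod_sub_sq_div_two hX, variance_eq_integral_prod_sub_sq_div_two hY]
  gcongr ?_ / 2
  refine integral_mono_ae ((hX.comp_fst P).sub (hX.comp_snd P)).integrable_sq
    ((hY.comp_fst P).sub (hY.comp_snd P)).integrable_sq ?_
  filter_upwards [h] with p hp using sq_le_sq.2 hp

end Variance

theorem stmt_19_general (μ ν : Measure ℝ)
    [IsProbabilityMeasure μ] [IsProbabilityMeasure ν]
    (hμ2 : Integrable (fun x => x ^ 2) μ) (hν2 : Integrable (fun x => x ^ 2) ν)
    (hdisp : MonotoneOn (fun t => rcQuantile ν t - rcQuantile μ t) (Ioo (0:ℝ) 1)) :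
    (∫ x, x ^ 2 ∂μ) - (∫ x, x ∂μ) ^ 2 ≤ (∫ x, x ^ 2 ∂ν) - (∫ x, x ∂ν) ^ 2 := by
  have hμ : MemLp id 2 μ := (memLp_two_iff_integrable_sq aestronglyMeasurable_id).2 hμ2
  have hν : MemLp id 2 ν := (memLp_two_iff_integrable_sq aestronglyMeasurable_id).2 hν2
  have hcoupling : ∀ᵐ p ∂(volume.restrict (Ioo (0 : ℝ) 1)).prod (volume.restrict (Ioo 0 1)),
      |rcQuantile μ p.1 - rcQuantile μ p.2| ≤ |rcQuantile ν p.1 - rcQuantile ν p.2| := by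
    rw [Measure.prod_restrict]
    filter_upwards [ae_restrict_mem (measurableSet_Ioo.prod measurableSet_Ioo)] with p hp
    exact abs_sub_le_abs_sub_of_monotoneOn (monotoneOn_rcQuantile μ) hdisp hp.1 hp.2
  have hvar := variance_le_variance_of_ae_abs_sub_le (memLp_rcQuantile μ hμ)
    (memLp_rcQuantile ν hν) hcoupling
  rw [variance_rcQuantile, variance_rcQuantile, variance_eq_sub hμ, variance_eq_sub hν] at hvar
  simpa using hvar

/-- Dispersive order implies the variance inequality: if the difference of
quantile functions `t ↦ G⁻¹(t) - F⁻¹(t)` is increasing on `(0,1)` (i.e.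
`X ≤_disp Y` for `X ∼ μ`, `Y ∼ ν`), and both distributions have finite second
moments, then `Var(X) ≤ Var(Y)`. -/
theorem stmt_19 (μ ν : Measure ℝ)
    [IsProbabilityMeasure μ] [IsProbabilityMeasure ν]
    (hμ1 : Integrable (fun x => x) μ) (hν1 : Integrable (fun x => x) ν)
    (hμ2 : Integrable (fun x => x ^ 2) μ) (hν2 : Integrable (fun x => x ^ 2) ν)
    (hdisp : MonotoneOn (fun t => rcQuantile ν t - rcQuantile μ t) (Ioo (0:ℝ) 1)) :
    (∫ x, x ^ 2 ∂μ) - (∫ x, x ∂μ) ^ 2 ≤ (∫ x, x ^ 2 ∂ν) - (∫ x, x ∂ν) ^ 2 :=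
  stmt_19_general μ ν hμ2 hν2 hdisp
end
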